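/- arXiv:0805.0550 — 2 statements merged into one kernel-verified Lean document; each statement's English description precedes it below -/
import Mathlib

section
/- Interface identity for the scheme with interface unknowns (per interface face): let (δ_m, δ_e) be either (δt₁, δt₂) or (δt₂, δt₁). Suppose u^m, p^m, 𝒰 ∈ P₀^{δ_m} and u^e, p^e, 𝒫 ∈ P₀^{δ_e} satisfy the perturbed transmission conditions u^m = Q^{δ_m}(−u^e) + 𝒰 and p^e = Q^{δ_e}(p^m) + 𝒫. Then ⟨u^m, p^m⟩_{L²(0,T)} + ⟨u^e, p^e⟩_{L²(0,T)} = ⟨𝒰, p^m⟩_{L²(0,T)} + ⟨u^e, 𝒫⟩_{L²(0,T)}. -/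
open MeasureTheory

/-- `L²((0,T); ℝ)`. -/
noncomputable abbrev L2T (T : ℝ) : Type :=
  Lp ℝ 2 (volume.restrict (Set.Ioo (0 : ℝ) T))

/-- `P₀^δ`: the subspace of `L²((0,T);ℝ)` of functions that are a.e. constant on each
interval `((n-1)δ, nδ)`, `n = 1, …, N`. -/
def P0 (δ T : ℝ) (N : ℕ) : Set (L2T T) :=
  {f : L2T T | ∀ n ∈ Finset.Icc 1 N, ∃ c : ℝ,
    ∀ᵐ t ∂(volume.restrict (Set.Ioo (((n : ℝ) - 1) * δ) ((n : ℝ) * δ))), f t = c}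

/-- `Q` is the `L²`-orthogonal projection of `L²((0,T);ℝ)` onto `P₀^δ`. -/
def IsL2Proj (δ T : ℝ) (N : ℕ) (Q : L2T T → L2T T) : Prop :=
  ∀ v : L2T T, Q v ∈ P0 δ T N ∧ ∀ w ∈ P0 δ T N, (inner ℝ (v - Q v) w : ℝ) = 0

theorem IsL2Proj.inner_apply_left {δ T : ℝ} {N : ℕ} {Q : L2T T → L2T T}
    (hQ : IsL2Proj δ T N Q) (v : L2T T) {w : L2T T} (hw : w ∈ P0 δ T N) :
    (inner ℝ (Q v) w : ℝ) = inner ℝ v w := by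
  have horth := (hQ v).2 w hw
  rw [inner_sub_left, sub_eq_zero] at horth
  exact horth.symm

theorem interface_identity_IS1_general
    (T : ℝ) (δm δe : ℝ) (Nm Ne : ℕ)
    (Qm Qe : L2T T → L2T T)
    (hQm : IsL2Proj δm T Nm Qm) (hQe : IsL2Proj δe T Ne Qe)
    (um pm calU : L2T T) (ue pe calP : L2T T)
    (hpm : pm ∈ P0 δm T Nm) (hue : ue ∈ P0 δe T Ne)
    (htrans1 : um = Qm (-ue) + calU)
    (htrans2 : pe = Qe pm + calP) :
    (inner ℝ um pm : ℝ) + (inner ℝ ue pe : ℝ)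
      = (inner ℝ calU pm : ℝ) + (inner ℝ ue calP : ℝ) := by
  subst htrans1 htrans2
  have hm : (inner ℝ (Qm (-ue)) pm : ℝ) = -inner ℝ ue pm := by
    rw [hQm.inner_apply_left _ hpm, inner_neg_left]
  have he : (inner ℝ ue (Qe pm) : ℝ) = inner ℝ ue pm := by
    rw [real_inner_comm, hQe.inner_apply_left _ hue, real_inner_comm]
  rw [inner_add_left, inner_add_right, hm, he]
  ring

/-- Interface identity for the scheme with interface unknowns (per interface face):
with `(δm, δe)` either `(δt₁, δt₂)` or `(δt₂, δt₁)`, if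
`u^m = Q^{δm}(−u^e) + 𝒰` and `p^e = Q^{δe}(p^m) + 𝒫`, then
`⟨u^m, p^m⟩ + ⟨u^e, p^e⟩ = ⟨𝒰, p^m⟩ + ⟨u^e, 𝒫⟩` in `L²(0,T)`. -/
theorem interface_identity_IS1
    (δt1 : ℝ) (hδt1 : 0 < δt1) (K : ℕ) (hK : 1 ≤ K)
    (δt2 : ℝ) (hδt2 : δt2 = (K : ℝ) * δt1)
    (N2 : ℕ) (hN2 : 1 ≤ N2) (T : ℝ) (hT : T = (N2 : ℝ) * δt2)
    (δm δe : ℝ) (Nm Ne : ℕ)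
    (hcase : (δm = δt1 ∧ Nm = N2 * K ∧ δe = δt2 ∧ Ne = N2)
           ∨ (δm = δt2 ∧ Nm = N2 ∧ δe = δt1 ∧ Ne = N2 * K))
    (Qm Qe : L2T T → L2T T)
    (hQm : IsL2Proj δm T Nm Qm) (hQe : IsL2Proj δe T Ne Qe)
    (um pm calU : L2T T) (ue pe calP : L2T T)
    (hum : um ∈ P0 δm T Nm) (hpm : pm ∈ P0 δm T Nm) (hcalU : calU ∈ P0 δm T Nm)
    (hue : ue ∈ P0 δe T Ne) (hpe : pe ∈ P0 δe T Ne) (hcalP : calP ∈ P0 δe T Ne)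
    (htrans1 : um = Qm (-ue) + calU)
    (htrans2 : pe = Qe pm + calP) :
    (inner ℝ um pm : ℝ) + (inner ℝ ue pe : ℝ)
      = (inner ℝ calU pm : ℝ) + (inner ℝ ue calP : ℝ) :=
  interface_identity_IS1_general T δm δe Nm Ne Qm Qe hQm hQe um pm calU ue pe calP hpm hue htrans1
    htrans2
end

section
/- Interface inequality for the overlapping scheme (per interface face): let (δ_m, δ_e) be either (δt₁, δt₂) or (δt₂, δt₁), and let d^m ≥ 0 and d^e be real numbers. Suppose u^m, p^m, 𝒰, U^m ∈ P₀^{δ_m} and u^e, p^e, 𝒫, U^e ∈ P₀^{δ_e} satisfy the perturbed transmission conditions u^m = Q^{δ_m}(−u^e) + 𝒰 and p^e + d^m u^e = Q^{δ_e}(p^m − d^m u^m + d^m U^m) + 𝒫 − d^e U^e. Then ⟨u^m, p^m⟩_{L²(0,T)} + ⟨u^e, p^e⟩_{L²(0,T)} ≤ ⟨𝒰, p^m⟩_{L²(0,T)} + ⟨u^e, 𝒫 − d^e U^e − d^m (𝒰 − U^m)⟩_{L²(0,T)}. -/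
open MeasureTheory

/-!
Eliminating `u^m` and `p^e` by the transmission conditions and using that `Q^{δm}`, `Q^{δe}` are
orthogonal projections with `p^m ∈ P₀^{δm}` and `u^e ∈ P₀^{δe}`, the right-hand side minus the
left-hand side is exactly `d^m ‖u^e + Q^{δm}(−u^e)‖² ≥ 0`.
-/

open scoped RealInnerProductSpace

section InnerProductSpace

variable {E : Type*} [NormedAddCommGroup E] [InnerProductSpace ℝ E]

def IsOrthogonalProjection (S : Set E) (Q : E → E) : Prop :=
  ∀ v, Q v ∈ S ∧ ∀ w ∈ S, ⟪v - Q v, w⟫ = 0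

namespace IsOrthogonalProjection

variable {S : Set E} {Q : E → E}

theorem inner_apply_left (hQ : IsOrthogonalProjection S Q) (v : E) {w : E} (hw : w ∈ S) :
    ⟪Q v, w⟫ = ⟪v, w⟫ := by
  have h := (hQ v).2 w hw
  rw [inner_sub_left] at h
  linarith

theorem inner_sub_apply_self_eq_norm_sq (hQ : IsOrthogonalProjection S Q) (v : E) :
    ⟪v - Q v, v⟫ = ‖v - Q v‖ ^ 2 := by
  have h := (hQ v).2 (Q v) (hQ v).1
  calc ⟪v - Q v, v⟫ = ⟪v - Q v, v - Q v⟫ + ⟪v - Q v, Q v⟫ := by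
        rw [← inner_add_right, sub_add_cancel]
    _ = ‖v - Q v‖ ^ 2 := by rw [h, add_zero, real_inner_self_eq_norm_sq]

end IsOrthogonalProjection

theorem interface_identity {Sm Se : Set E} {Qm Qe : E → E}
    (hQm : IsOrthogonalProjection Sm Qm) (hQe : IsOrthogonalProjection Se Qe)
    {dm de : ℝ} {um pm calU Um ue pe calP Ue : E} (hpm : pm ∈ Sm) (hue : ue ∈ Se)
    (htrans1 : um = Qm (-ue) + calU)
    (htrans2 : pe + dm • ue = Qe (pm - dm • um + dm • Um) + calP - de • Ue) :
    ⟪um, pm⟫ + ⟪ue, pe⟫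
      = ⟪calU, pm⟫ + ⟪ue, calP - de • Ue - dm • (calU - Um)⟫ - dm * ‖ue + Qm (-ue)‖ ^ 2 := by
  set q := Qm (-ue)
  set w := Qe (pm - dm • um + dm • Um)
  have hq : ⟪q, pm⟫ = -⟪ue, pm⟫ := by rw [hQm.inner_apply_left _ hpm, inner_neg_left]
  have hw : ⟪w, ue⟫ = ⟪pm - dm • um + dm • Um, ue⟫ := hQe.inner_apply_left _ hue
  have hnorm : ⟪-ue - q, -ue⟫ = ‖-ue - q‖ ^ 2 := hQm.inner_sub_apply_self_eq_norm_sq _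
  rw [show -ue - q = -(ue + q) by abel, norm_neg] at hnorm
  have hpe : pe = w + calP - de • Ue - dm • ue := by rw [← htrans2]; abel
  subst hpe
  simp only [htrans1, inner_add_left, inner_add_right, inner_sub_left, inner_sub_right,
    inner_neg_left, inner_neg_right, real_inner_smul_left, real_inner_smul_right] at hq hw hnorm ⊢
  simp only [real_inner_comm ue] at hq hw hnorm ⊢
  linear_combination hq + hw - dm * hnorm

end InnerProductSpace

theorem interface_inequality_IS2_general
    (T : ℝ) (δm δe : ℝ) (Nm Ne : ℕ)
    (dm de : ℝ) (hdm : 0 ≤ dm)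
    (Qm Qe : L2T T → L2T T)
    (hQm : IsL2Proj δm T Nm Qm) (hQe : IsL2Proj δe T Ne Qe)
    (um pm calU Um : L2T T) (ue pe calP Ue : L2T T)
    (hpm : pm ∈ P0 δm T Nm) (hue : ue ∈ P0 δe T Ne)
    (htrans1 : um = Qm (-ue) + calU)
    (htrans2 : pe + dm • ue = Qe (pm - dm • um + dm • Um) + calP - de • Ue) :
    (inner ℝ um pm : ℝ) + (inner ℝ ue pe : ℝ)
      ≤ (inner ℝ calU pm : ℝ) + (inner ℝ ue (calP - de • Ue - dm • (calU - Um)) : ℝ) := by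
  rw [interface_identity hQm hQe hpm hue htrans1 htrans2]
  have := mul_nonneg hdm (sq_nonneg ‖ue + Qm (-ue)‖)
  linarith

/-- Interface inequality for the overlapping scheme (per interface face):
with `(δm, δe)` either `(δt₁, δt₂)` or `(δt₂, δt₁)`, `d^m ≥ 0`, `d^e ∈ ℝ`, if
`u^m = Q^{δm}(−u^e) + 𝒰` and
`p^e + d^m u^e = Q^{δe}(p^m − d^m u^m + d^m U^m) + 𝒫 − d^e U^e`, then
`⟨u^m, p^m⟩ + ⟨u^e, p^e⟩ ≤ ⟨𝒰, p^m⟩ + ⟨u^e, 𝒫 − d^e U^e − d^m(𝒰 − U^m)⟩` in `L²(0,T)`. -/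
theorem interface_inequality_IS2
    (δt1 : ℝ) (hδt1 : 0 < δt1) (K : ℕ) (hK : 1 ≤ K)
    (δt2 : ℝ) (hδt2 : δt2 = (K : ℝ) * δt1)
    (N2 : ℕ) (hN2 : 1 ≤ N2) (T : ℝ) (hT : T = (N2 : ℝ) * δt2)
    (δm δe : ℝ) (Nm Ne : ℕ)
    (hcase : (δm = δt1 ∧ Nm = N2 * K ∧ δe = δt2 ∧ Ne = N2)
           ∨ (δm = δt2 ∧ Nm = N2 ∧ δe = δt1 ∧ Ne = N2 * K))
    (dm de : ℝ) (hdm : 0 ≤ dm)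
    (Qm Qe : L2T T → L2T T)
    (hQm : IsL2Proj δm T Nm Qm) (hQe : IsL2Proj δe T Ne Qe)
    (um pm calU Um : L2T T) (ue pe calP Ue : L2T T)
    (hum : um ∈ P0 δm T Nm) (hpm : pm ∈ P0 δm T Nm)
    (hcalU : calU ∈ P0 δm T Nm) (hUm : Um ∈ P0 δm T Nm)
    (hue : ue ∈ P0 δe T Ne) (hpe : pe ∈ P0 δe T Ne)
    (hcalP : calP ∈ P0 δe T Ne) (hUe : Ue ∈ P0 δe T Ne)
    (htrans1 : um = Qm (-ue) + calU)
    (htrans2 : pe + dm • ue = Qe (pm - dm • um + dm • Um) + calP - de • Ue) :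
    (inner ℝ um pm : ℝ) + (inner ℝ ue pe : ℝ)
      ≤ (inner ℝ calU pm : ℝ) + (inner ℝ ue (calP - de • Ue - dm • (calU - Um)) : ℝ) :=
  interface_inequality_IS2_general T δm δe Nm Ne dm de hdm Qm Qe hQm hQe um pm calU Um ue pe calP Ue
    hpm hue htrans1 htrans2
end
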